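/- Let E be a real vector space of dimension 2q with q ≥ 1, let b : E × E → E be an ℝ-bilinear map, and let B be its complexification. Then the following are equivalent: (i) for all V, W ∈ E^c such that span_ℂ{V, W} has real index zero, B(V, W̄) lies in the complex line ℂ·W̄; (ii) there exists an ℝ-linear functional α : E → ℝ such that b(X, Z) = α(X)·Z for all X, Z ∈ E. -/
import Mathlib


open TensorProduct Complex Submodule Module

/-- The canonical inclusion `E → E^c = ℂ ⊗[ℝ] E` of a real vector space into its
complexification. -/
noncomputable def cplIncl (E : Type*) [AddCommGroup E] [Module ℝ E] : E →ₗ[ℝ] ℂ ⊗[ℝ] E :=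
  TensorProduct.mk ℝ ℂ E 1

/-- The conjugation `V ↦ V̄` of the complexification: the conjugate-linear involution
fixing `E ⊆ E^c`. -/
noncomputable def cplConj (E : Type*) [AddCommGroup E] [Module ℝ E] :
    ℂ ⊗[ℝ] E →ₗ[ℝ] ℂ ⊗[ℝ] E :=
  LinearMap.rTensor E Complex.conjAe.toLinearMap

/-- A complex subspace `S ⊆ E^c` has real index zero if `S ∩ S̄ = 0`, i.e. any `v ∈ S`
whose conjugate also lies in `S` (equivalently `v ∈ S ∩ S̄`) vanishes. -/
def RealIndexZero {E : Type*} [AddCommGroup E] [Module ℝ E]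
    (S : Submodule ℂ (ℂ ⊗[ℝ] E)) : Prop :=
  ∀ v ∈ S, cplConj E v ∈ S → v = 0

section aux
variable {E : Type*} [AddCommGroup E] [Module ℝ E]

lemma cplIncl_apply (x : E) : cplIncl E x = (1:ℂ) ⊗ₜ[ℝ] x := rfl

lemma cplConj_tmul (z : ℂ) (v : E) :
    cplConj E (z ⊗ₜ[ℝ] v) = (starRingEnd ℂ z) ⊗ₜ[ℝ] v := rfl

lemma smul_incl (z : ℂ) (v : E) : z • cplIncl E v = z ⊗ₜ[ℝ] v := by
  rw [cplIncl_apply, smul_tmul', smul_eq_mul, mul_one]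

lemma cplConj_incl (v : E) : cplConj E (cplIncl E v) = cplIncl E v := by
  rw [cplIncl_apply, cplConj_tmul, map_one]

lemma cplConj_smul (z : ℂ) (w : ℂ ⊗[ℝ] E) :
    cplConj E (z • w) = (starRingEnd ℂ z) • cplConj E w := by
  induction w using TensorProduct.induction_on with
  | zero => simp
  | tmul a v =>
      rw [smul_tmul', cplConj_tmul, smul_eq_mul, cplConj_tmul, smul_tmul', smul_eq_mul, map_mul]
  | add x y hx hy => simp [smul_add, map_add, hx, hy]

/-- The real-linear "real and imaginary part" map `ℂ ⊗ E → E × E`. -/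
noncomputable def reIm : ℂ ⊗[ℝ] E →ₗ[ℝ] E × E :=
  TensorProduct.lift (LinearMap.mk₂ ℝ (fun c v => (c.re • v, c.im • v))
    (fun c d v => by simp [add_smul, Prod.ext_iff])
    (fun r c v => by simp [Complex.smul_re, Complex.smul_im, Prod.ext_iff, smul_smul])
    (fun c v w => by simp [smul_add, Prod.ext_iff])
    (fun r c v => by simp [Prod.ext_iff, smul_comm r]))

lemma reIm_tmul (z : ℂ) (v : E) : (reIm (z ⊗ₜ[ℝ] v) : E × E) = (z.re • v, z.im • v) := rfl

/-- Independence predicate for a pair of vectors. -/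
def Indep (X Y : E) : Prop := ∀ s t : ℝ, s • X + t • Y = 0 → s = 0 ∧ t = 0

lemma Indep.ne_zero_left {X Y : E} (h : Indep X Y) : X ≠ 0 := by
  intro h0
  have := h 1 0 (by simp [h0])
  simpa using this.1

lemma Indep.ne_zero_right {X Y : E} (h : Indep X Y) : Y ≠ 0 := by
  intro h0
  have := h 0 1 (by simp [h0])
  simpa using this.2

lemma Indep.tensor_eq {X Y : E} (h : Indep X Y) {a c a' c' : ℂ}
    (hh : a ⊗ₜ[ℝ] X + c ⊗ₜ[ℝ] Y = a' ⊗ₜ[ℝ] X + c' ⊗ₜ[ℝ] Y) : a = a' ∧ c = c' := by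
  have h1 := congrArg (reIm (E := E)) hh
  simp only [map_add, reIm_tmul, Prod.ext_iff, Prod.fst_add, Prod.snd_add] at h1
  have hre := h (a.re - a'.re) (c.re - c'.re)
    (by linear_combination (norm := module) h1.1)
  have him := h (a.im - a'.im) (c.im - c'.im)
    (by linear_combination (norm := module) h1.2)
  constructor
  · exact Complex.ext (by linarith [hre.1]) (by linarith [him.1])
  · exact Complex.ext (by linarith [hre.2]) (by linarith [him.2])

lemma smul_eq_cancel {a a' : ℝ} {X : E} (hX : X ≠ 0) (h : a • X = a' • X) : a = a' := by
  by_contra hne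
  have h2 : (a - a') • X = 0 := by rw [sub_smul, h, sub_self]
  rcases smul_eq_zero.mp h2 with h' | h'
  · exact hne (sub_eq_zero.mp h')
  · exact hX h'

lemma riz {X Y : E} (hI : Indep X Y) {t : ℝ} (ht : t ≠ 0) :
    RealIndexZero (span ℂ ({cplIncl E X + ((t:ℂ)*I) • cplIncl E Y} : Set (ℂ ⊗[ℝ] E))) := by
  intro v hv hcv
  rw [mem_span_singleton] at hv hcv
  obtain ⟨c, hc⟩ := hv
  obtain ⟨d, hd⟩ := hcv
  rw [← hc, cplConj_smul, map_add, cplConj_smul, cplConj_incl, cplConj_incl] at hd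
  have hw : (starRingEnd ℂ) ((t:ℂ)*I) = -((t:ℂ)*I) := by
    simp [map_mul, Complex.conj_ofReal]
  rw [hw] at hd
  -- hd : d • (ιX + tI • ιY) = conj c • (ιX + (-(tI)) • ιY)
  have h1 : d ⊗ₜ[ℝ] X + (d * ((t:ℂ)*I)) ⊗ₜ[ℝ] Y
      = (starRingEnd ℂ c) ⊗ₜ[ℝ] X + (starRingEnd ℂ c * (-((t:ℂ)*I))) ⊗ₜ[ℝ] Y := by
    rw [← smul_incl, ← smul_incl, ← smul_incl, ← smul_incl]
    linear_combination (norm := module) hd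
  obtain ⟨e1, e2⟩ := hI.tensor_eq h1
  have htI : ((t:ℂ)*I) ≠ 0 :=
    mul_ne_zero (by exact_mod_cast ht) Complex.I_ne_zero
  have hc0 : starRingEnd ℂ c = 0 := by
    have h2 : (2 * starRingEnd ℂ c) * ((t:ℂ)*I) = 0 := by
      rw [e1] at e2; linear_combination e2
    rcases mul_eq_zero.mp h2 with h' | h'
    · rcases mul_eq_zero.mp h' with h'' | h''
      · exact absurd h'' two_ne_zero
      · exact h''
    · exact absurd h' htI
  have : c = 0 := by
    have := congrArg (starRingEnd ℂ) hc0
    simpa using this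
  rw [← hc, this, zero_smul]

end aux

/-- For `dim_ℝ E = 2q`, `q ≥ 1`, an `ℝ`-bilinear map `b : E × E → E` with
complexification `B`: `B(V, W̄) ∈ ℂ·W̄` whenever `span_ℂ{V, W}` has real index zero iff
`b(X,Z) = α(X)·Z` for some `ℝ`-linear functional `α`. -/
theorem bilinear_conj_in_line_iff
    (E : Type*) [AddCommGroup E] [Module ℝ E] [FiniteDimensional ℝ E]
    (q : ℕ) (hq : 1 ≤ q) (hdim : finrank ℝ E = 2 * q)
    (b : E →ₗ[ℝ] E →ₗ[ℝ] E)
    (B : ℂ ⊗[ℝ] E →ₗ[ℂ] ℂ ⊗[ℝ] E →ₗ[ℂ] ℂ ⊗[ℝ] E)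
    (hB : ∀ x y : E, B (cplIncl E x) (cplIncl E y) = cplIncl E (b x y)) :
    (∀ V W : ℂ ⊗[ℝ] E, RealIndexZero (Submodule.span ℂ ({V, W} : Set (ℂ ⊗[ℝ] E))) →
        ∃ c : ℂ, B V (cplConj E W) = c • cplConj E W) ↔
      (∃ α : E →ₗ[ℝ] ℝ, ∀ X Z : E, b X Z = α X • Z) := by
  constructor
  · intro h
    classical
    -- every nonzero vector has an independent partner
    have exY : ∀ X : E, X ≠ 0 → ∃ Y, Indep X Y := by
      intro X hX
      have hne : span ℝ ({X} : Set E) ≠ ⊤ := by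
        intro hTop
        have h1 := finrank_span_singleton (K := ℝ) hX
        rw [hTop, finrank_top] at h1
        omega
      obtain ⟨Y, hY⟩ : ∃ Y, Y ∉ span ℝ ({X} : Set E) := by
        by_contra hall
        push_neg at hall
        exact hne (Submodule.eq_top_iff'.mpr hall)
      refine ⟨Y, fun s t hst => ?_⟩
      rcases eq_or_ne t 0 with rfl | ht
      · refine ⟨?_, rfl⟩
        have h0 : s • X = 0 := by simpa using hst
        rcases smul_eq_zero.mp h0 with h' | h'
        · exact h'
        · exact absurd h' hX
      · exfalso
        apply hY
        rw [mem_span_singleton]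
        refine ⟨t⁻¹ * (-s), ?_⟩
        have h2 : t • Y = (-s) • X := by linear_combination (norm := module) hst
        rw [← smul_smul, ← h2, smul_smul, inv_mul_cancel₀ ht, one_smul]
    -- key equations from the hypothesis, for each independent pair and t ≠ 0
    have eqs : ∀ X Y : E, Indep X Y → ∀ t : ℝ, t ≠ 0 → ∃ c : ℂ,
        (b X X + (t*t) • b Y Y = c.re • X + (t*c.im) • Y) ∧
        (t • (b Y X - b X Y) = c.im • X - (t*c.re) • Y) := by
      intro X Y hI t ht
      set V := cplIncl E X + ((t:ℂ)*I) • cplIncl E Y with hV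
      obtain ⟨c, hc⟩ := h V V (by rw [Set.pair_eq_singleton]; exact riz hI ht)
      have hw : (starRingEnd ℂ) ((t:ℂ)*I) = -((t:ℂ)*I) := by
        simp [map_mul, Complex.conj_ofReal]
      have hconjV : cplConj E V = cplIncl E X + (-((t:ℂ)*I)) • cplIncl E Y := by
        rw [hV, map_add, cplConj_smul, cplConj_incl, cplConj_incl, hw]
      rw [hconjV, hV] at hc
      have hexp : ((1:ℂ)) ⊗ₜ[ℝ] (b X X) + (-((t:ℂ)*I)) ⊗ₜ[ℝ] (b X Y)
          + ((t:ℂ)*I) ⊗ₜ[ℝ] (b Y X) + (((t:ℂ)*I) * (-((t:ℂ)*I))) ⊗ₜ[ℝ] (b Y Y)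
          = c ⊗ₜ[ℝ] X + (c * (-((t:ℂ)*I))) ⊗ₜ[ℝ] Y := by
        rw [← smul_incl, ← smul_incl, ← smul_incl, ← smul_incl, ← smul_incl, ← smul_incl]
        have hL : B (cplIncl E X + ((t:ℂ)*I) • cplIncl E Y)
            (cplIncl E X + (-((t:ℂ)*I)) • cplIncl E Y)
            = (1:ℂ) • cplIncl E (b X X) + (-((t:ℂ)*I)) • cplIncl E (b X Y)
              + ((t:ℂ)*I) • cplIncl E (b Y X)
              + (((t:ℂ)*I) * (-((t:ℂ)*I))) • cplIncl E (b Y Y) := by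
          simp only [map_add, map_smul, LinearMap.add_apply, LinearMap.smul_apply, hB,
            smul_smul, one_smul]
          module
        rw [← hL, hc]
        rw [smul_add, smul_smul]
      have hri := DFunLike.congr_arg (reIm (E := E)) hexp
      simp only [map_add, reIm_tmul, Prod.ext_iff, Prod.fst_add, Prod.snd_add,
        Complex.mul_re, Complex.mul_im, Complex.neg_re, Complex.neg_im,
        Complex.ofReal_re, Complex.ofReal_im, Complex.I_re, Complex.I_im,
        Complex.one_re, Complex.one_im] at hri
      refine ⟨c, ?_, ?_⟩
      · linear_combination (norm := module) hri.1
      · linear_combination (norm := module) hri.2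
    -- diagonal values are multiples
    have pairProp : ∀ X Y : E, Indep X Y → ∃ a β : ℝ,
        b X X = a • X ∧ b Y Y = β • Y ∧ b Y X - b X Y = β • X - a • Y := by
      intro X Y hI
      obtain ⟨c, hc1, hc2⟩ := eqs X Y hI 1 one_ne_zero
      obtain ⟨d, hd1, hd2⟩ := eqs X Y hI 2 two_ne_zero
      have comb : (2*c.im - d.im) • X + (2*d.re - 2*c.re) • Y = 0 := by
        linear_combination (norm := module) hd2 - (2:ℝ) • hc2
      obtain ⟨g1, g2⟩ := hI _ _ comb
      have hdre : d.re = c.re := by linarith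
      have hdim2 : d.im = 2*c.im := by linarith
      rw [hdre, hdim2] at hd1
      have hbYY : b Y Y = c.im • Y := by
        linear_combination (norm := module) ((1:ℝ)/3) • hd1 - ((1:ℝ)/3) • hc1
      have hbXX : b X X = c.re • X := by
        linear_combination (norm := module) hc1 - hbYY
      exact ⟨c.re, c.im, hbXX, hbYY, by linear_combination (norm := module) hc2⟩
    -- the eigenvalue function
    have hsq : ∀ X : E, ∃ a : ℝ, b X X = a • X := by
      intro X
      by_cases hX : X = 0
      · exact ⟨0, by simp [hX]⟩
      · obtain ⟨Y, hY⟩ := exY X hX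
        obtain ⟨a, β, h1, _, _⟩ := pairProp X Y hY
        exact ⟨a, h1⟩
    set γ : E → ℝ := fun X => if X = 0 then 0 else Classical.choose (hsq X) with hγdef
    have hγ : ∀ X, b X X = γ X • X := by
      intro X
      by_cases hX : X = 0
      · simp [hγdef, hX]
      · simp only [hγdef, if_neg hX]
        exact Classical.choose_spec (hsq X)
    have hγ0 : γ 0 = 0 := by simp [hγdef]
    -- the commutator relation
    have star : ∀ X Y : E, Indep X Y → b Y X - b X Y = γ Y • X - γ X • Y := by
      intro X Y hI
      obtain ⟨a, β, h1, h2, h3⟩ := pairProp X Y hI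
      have ha : a = γ X := smul_eq_cancel hI.ne_zero_left (h1.symm.trans (hγ X))
      have hβ : β = γ Y := smul_eq_cancel hI.ne_zero_right (h2.symm.trans (hγ Y))
      rw [ha, hβ] at h3
      exact h3
    -- homogeneity of γ
    have homog : ∀ (r : ℝ) (X : E), γ (r • X) = r * γ X := by
      intro r X
      by_cases hX : X = 0
      · simp [hX, hγ0]
      by_cases hr : r = 0
      · simp [hr, hγ0]
      have h1 : b (r • X) (r • X) = (r * r * γ X) • X := by
        simp only [map_smul, LinearMap.smul_apply, hγ X, smul_smul]
        module
      have h2 : b (r • X) (r • X) = (γ (r • X) * r) • X := by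
        rw [hγ (r • X), smul_smul]
      have h3 : γ (r • X) * r = r * r * γ X := smul_eq_cancel hX (h2.symm.trans h1)
      have h4 : γ (r • X) * r = (r * γ X) * r := by rw [h3]; ring
      exact mul_right_cancel₀ hr h4
    -- decomposition of non-independent pairs
    have dep : ∀ X Y : E, X ≠ 0 → ¬ Indep X Y → ∃ r : ℝ, Y = r • X := by
      intro X Y hX hnI
      by_contra hno
      push_neg at hno
      apply hnI
      intro s t hst
      rcases eq_or_ne t 0 with rfl | ht
      · refine ⟨?_, rfl⟩
        have h0 : s • X = 0 := by simpa using hst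
        rcases smul_eq_zero.mp h0 with h' | h'
        · exact h'
        · exact absurd h' hX
      · exfalso
        apply hno (t⁻¹ * (-s))
        have h2 : t • Y = (-s) • X := by linear_combination (norm := module) hst
        rw [← smul_smul, ← h2, smul_smul, inv_mul_cancel₀ ht, one_smul]
    -- additivity of γ
    have hadd : ∀ X Y : E, γ (X + Y) = γ X + γ Y := by
      intro X Y
      by_cases hX : X = 0
      · rw [hX, zero_add, hγ0, zero_add]
      by_cases hI : Indep X Y
      · have hI2 : Indep X (X + Y) := by
          intro s t hst
          have h0 := hI (s + t) t (by linear_combination (norm := module) hst)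
          exact ⟨by linarith [h0.1, h0.2], h0.2⟩
        have e1 := star X Y hI
        have e2 := star X (X + Y) hI2
        have bb1 : b (X + Y) X = b X X + b Y X := by
          rw [map_add, LinearMap.add_apply]
        have bb2 : b X (X + Y) = b X X + b X Y := map_add _ _ _
        rw [bb1, bb2] at e2
        have e4 : (γ X + γ Y - γ (X + Y)) • X = 0 := by
          linear_combination (norm := module) e2 - e1
        rcases smul_eq_zero.mp e4 with h' | h'
        · linarith
        · exact absurd h' hX
      · obtain ⟨r, hr⟩ := dep X Y hX hI
        subst hr
        have hXY : X + r • X = (1 + r) • X := by module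
        rw [hXY, homog, homog]
        ring
    refine ⟨{ toFun := γ, map_add' := hadd,
              map_smul' := fun r X => by simp [homog, smul_eq_mul] }, ?_⟩
    intro X Z
    simp only [LinearMap.coe_mk, AddHom.coe_mk]
    by_cases hX : X = 0
    · simp [hX, hγ0]
    by_cases hI : Indep X Z
    · have e1 := star X Z hI
      have e2 := hγ (X + Z)
      rw [hadd] at e2
      have bb1 : b (X + Z) (X + Z) = b X X + b X Z + b Z X + b Z Z := by
        simp only [map_add, LinearMap.add_apply]
        abel
      rw [bb1, hγ X, hγ Z] at e2
      linear_combination (norm := module) ((1:ℝ)/2) • e2 - ((1:ℝ)/2) • e1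
    · obtain ⟨r, hr⟩ := dep X Z hX hI
      subst hr
      rw [map_smul, hγ X, smul_smul, smul_smul, mul_comm]
  · rintro ⟨α, hα⟩ V W _
    let A : ℂ ⊗[ℝ] E →ₗ[ℂ] ℂ :=
      (Algebra.TensorProduct.rid ℝ ℂ ℂ).toLinearMap ∘ₗ (LinearMap.baseChange ℂ α)
    have hA : ∀ (z : ℂ) (x : E), A (z ⊗ₜ[ℝ] x) = z * (α x : ℂ) := by
      intro z x
      simp [A, LinearMap.baseChange_tmul, Algebra.TensorProduct.rid_tmul,
        Complex.real_smul, mul_comm]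
    have key : ∀ V W : ℂ ⊗[ℝ] E, B V W = A V • W := by
      intro V W
      induction V using TensorProduct.induction_on with
      | zero => simp
      | add V₁ V₂ h1 h2 => rw [map_add, LinearMap.add_apply, h1, h2, map_add, add_smul]
      | tmul z x =>
        induction W using TensorProduct.induction_on with
        | zero => simp
        | add W₁ W₂ g1 g2 => rw [map_add, g1, g2, smul_add]
        | tmul w y =>
          have hcast : cplIncl E ((α x) • y) = (α x : ℂ) • cplIncl E y := by
            rw [map_smul]
            exact (algebraMap_smul ℂ (α x) (cplIncl E y)).symm
          calc B (z ⊗ₜ[ℝ] x) (w ⊗ₜ[ℝ] y) = (z*w) • cplIncl E (b x y) := by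
                rw [← smul_incl z x, ← smul_incl w y]
                simp only [map_smul, LinearMap.smul_apply, hB x y, smul_smul]
                module
            _ = (z * w * (α x : ℂ)) • cplIncl E y := by rw [hα, hcast, smul_smul]
            _ = A (z ⊗ₜ[ℝ] x) • (w ⊗ₜ[ℝ] y) := by
                rw [hA, ← smul_incl w y, smul_smul]
                module
    exact ⟨A V, key V (cplConj E W)⟩
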